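/- Let R ⊆ [n]² with |R| ≤ Cn, and suppose a uniformly random π ∈ S_n avoids R with probability at least γ > 0. If n ≥ 32C/γ + 3, then for all i_1, j_1, i_2, j_2 ∈ [n] with i_1 ≠ i_2 and j_1 ≠ j_2, the conditional probability that π avoids R \ {(i_1,j_1),(i_2,j_2)} given that π(i_1) = j_1 and π(i_2) = j_2 is at least γ/4. -/

import Mathlib

/-!
Start from a permutation `σ` avoiding `R` and swap two pairs of positions so that the result `ρ`
sends `i₁ ↦ j₁` and `i₂ ↦ j₂`. Knowing `ρ` and the two positions it was swapped with recovers `σ`,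
so `σ ↦ ρ` is at most `n²`-to-one. If `ρ` meets `R \ {(i₁, j₁), (i₂, j₂)}` at `(k, ρ k)`, then
`σ k ∈ {j₁, j₂}` and `ρ k ∈ {σ i₁, σ i₂}`, so `σ` takes prescribed values at two distinct points;
there are at most `4 |R| (n - 2)!` such `σ`. Hence `γ n! ≤ n² #T + 4 C n (n - 2)!`, where `T` is the
set counted in the conclusion, and `n ≥ 32 C / γ + 3` turns this into `#T ≥ γ (n - 2)! / 4`.
-/

open Finset Equiv
open scoped Nat

namespace Equiv.Perm

variable {α : Type*} [DecidableEq α] {i1 i2 j1 j2 : α}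

def pin (i j : α) (σ : Perm α) : Perm α := σ * swap i (σ⁻¹ j)

@[simp] lemma pin_apply_self (i j : α) (σ : Perm α) : pin i j σ i = j := by
  simp [pin]

lemma pin_apply_of_ne {i k : α} (j : α) (σ : Perm α) (hk : k ≠ i) :
    pin i j σ k = if σ k = j then σ i else σ k := by
  simp only [pin, coe_mul, Function.comp_apply]
  split_ifs with h
  · simp [← h]
  · rw [swap_apply_of_ne_of_ne hk (fun h' => h (by simp [h']))]

lemma pin_mul_swap (i j : α) (σ : Perm α) : pin i j σ * swap i (σ⁻¹ j) = σ := by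
  simp [pin, mul_assoc]

lemma pin_injective (i j : α) : Function.Injective fun σ : Perm α => (pin i j σ, σ⁻¹ j) := by
  intro σ τ h
  obtain ⟨hpin, hpre⟩ := Prod.mk.inj h
  calc σ = pin i j σ * swap i (σ⁻¹ j) := (pin_mul_swap i j σ).symm
    _ = pin i j τ * swap i (τ⁻¹ j) := by rw [hpin, hpre]
    _ = τ := pin_mul_swap i j τ

lemma pin_pin_apply_left (hi : i1 ≠ i2) (hj : j1 ≠ j2) (σ : Perm α) :
    pin i2 j2 (pin i1 j1 σ) i1 = j1 := by
  simp [pin_apply_of_ne _ _ hi, hj]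

lemma pin_pin_injective :
    Function.Injective fun σ : Perm α =>
      (pin i2 j2 (pin i1 j1 σ), σ⁻¹ j1, (pin i1 j1 σ)⁻¹ j2) := by
  intro σ τ h
  simp only [Prod.mk.injEq] at h
  obtain ⟨h2, h1, h12⟩ := h
  exact pin_injective i1 j1 (Prod.ext (pin_injective i2 j2 (Prod.ext h2 h12)) h1)

lemma pin_pin_apply_of_ne (hi : i1 ≠ i2) {σ : Perm α} {k : α} (hk1 : k ≠ i1) (hk2 : k ≠ i2)
    (h : pin i2 j2 (pin i1 j1 σ) k ≠ σ k) :
    (σ k = j1 ∨ σ k = j2) ∧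
      (pin i2 j2 (pin i1 j1 σ) k = σ i1 ∨ pin i2 j2 (pin i1 j1 σ) k = σ i2) := by
  rw [pin_apply_of_ne _ _ hk2, pin_apply_of_ne _ _ hk1, pin_apply_of_ne _ _ hi.symm] at h ⊢
  split_ifs at h ⊢ <;> simp_all

lemma exists_perm_apply_eq_apply_eq {u v c d : α} (huv : u ≠ v) (hcd : c ≠ d) :
    ∃ τ : Perm α, τ u = c ∧ τ v = d := by
  refine ⟨swap (swap u c v) d * swap u c, ?_, by simp⟩
  simp only [coe_mul, Function.comp_apply, swap_apply_left]
  by_cases hvc : v = c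
  · subst hvc
    simp [swap_apply_of_ne_of_ne huv.symm hcd]
  · rw [swap_apply_of_ne_of_ne huv.symm hvc]
    exact swap_apply_of_ne_of_ne (Ne.symm hvc) hcd

def Avoids (R : Finset (α × α)) (σ : Perm α) : Prop := ∀ k, (k, σ k) ∉ R

variable [Fintype α]

instance (R : Finset (α × α)) : DecidablePred (Avoids R) :=
  fun _ => Fintype.decidableForallFintype

lemma card_filter_apply_eq_apply_eq_le {x z : α} (hxz : x ≠ z) (u v : α) :
    #{σ : Perm α | σ x = u ∧ σ z = v} ≤ (Fintype.card α - 2)! := by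
  by_cases huv : u = v
  · subst huv
    have : ({σ : Perm α | σ x = u ∧ σ z = u} : Finset (Perm α)) = ∅ :=
      filter_eq_empty_iff.mpr fun σ _ h => hxz (σ.injective (h.1.trans h.2.symm))
    simp [this]
  -- `(σ, c, d) ↦ τ c d * σ`, with `τ c d` sending `(u, v)` to `(c, d)`, injects
  -- `S × offDiag` into `Perm α`.
  choose! τ hτ using fun c d (hcd : c ≠ d) => exists_perm_apply_eq_apply_eq (α := α) huv hcd
  set S : Finset (Perm α) := {σ | σ x = u ∧ σ z = v}
  have hinj : Set.InjOn (fun q : Perm α × α × α => τ q.2.1 q.2.2 * q.1)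
      (S ×ˢ (univ : Finset α).offDiag : Finset _) := by
    rintro ⟨σ, c, d⟩ hq ⟨σ', c', d'⟩ hq' heq
    simp only [coe_product, Set.mem_prod, coe_filter, mem_univ, true_and, Set.mem_ofPred_eq,
      coe_offDiag, Set.mem_offDiag, S] at hq hq' heq
    have hx := congrArg (· x) heq
    have hz := congrArg (· z) heq
    simp only [coe_mul, Function.comp_apply, hq.1.1, hq.1.2, hq'.1.1, hq'.1.2,
      (hτ c d hq.2.2.2).1, (hτ c d hq.2.2.2).2, (hτ c' d' hq'.2.2.2).1,
      (hτ c' d' hq'.2.2.2).2] at hx hz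
    subst hx hz
    rw [mul_left_cancel heq]
  have hcard := card_le_card_of_injOn _ (fun _ _ => mem_univ _) hinj
  rw [card_product, offDiag_card, card_univ, card_univ, Fintype.card_perm] at hcard
  obtain ⟨m, hm⟩ : ∃ m, Fintype.card α = m + 2 :=
    ⟨_, (Nat.sub_add_cancel (Fintype.one_lt_card_iff.mpr ⟨x, z, hxz⟩)).symm⟩
  have hpairs : (m + 2) * (m + 2) - (m + 2) = (m + 2) * (m + 1) := by
    rw [Nat.sub_eq_iff_eq_add (by nlinarith)]; ring
  have hfac : (m + 2)! = m ! * ((m + 2) * (m + 1)) := by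
    rw [Nat.factorial_succ, Nat.factorial_succ]; ring
  rw [hm, hpairs, hfac] at hcard
  rw [hm, Nat.add_sub_cancel]
  exact Nat.le_of_mul_le_mul_right hcard (by positivity)

lemma card_filter_avoids_pin_pin_le (hi : i1 ≠ i2) (hj : j1 ≠ j2) (R : Finset (α × α)) :
    #{σ | Avoids R (pin i2 j2 (pin i1 j1 σ))} ≤
      #{π | π i1 = j1 ∧ π i2 = j2 ∧ Avoids R π} * (Fintype.card α * Fintype.card α) := by
  have h := card_le_card_of_injOn (s := {σ | Avoids R (pin i2 j2 (pin i1 j1 σ))})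
    (t := ({π | π i1 = j1 ∧ π i2 = j2 ∧ Avoids R π} : Finset (Perm α)) ×ˢ
      (univ : Finset (α × α))) _
    (fun σ hσ => ?_) (pin_pin_injective (i1 := i1) (i2 := i2) (j1 := j1) (j2 := j2)).injOn
  · simpa only [card_product, card_univ, Fintype.card_prod] using h
  · simp only [coe_filter, mem_univ, true_and, Set.mem_ofPred_eq] at hσ
    simp [hσ, pin_pin_apply_left hi hj]

lemma card_filter_avoids_and_not_avoids_pin_pin_le (hi : i1 ≠ i2) (hj : j1 ≠ j2)
    (R : Finset (α × α)) :
    #{σ | Avoids R σ ∧ ¬Avoids ((R.erase (i1, j1)).erase (i2, j2)) (pin i2 j2 (pin i1 j1 σ))} ≤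
      #R * 4 * (Fintype.card α - 2)! := by
  set I := {p ∈ R | p.1 ≠ i1 ∧ p.1 ≠ i2} ×ˢ (({i1, i2} : Finset α) ×ˢ ({j1, j2} : Finset α))
  have hsub : ({σ | Avoids R σ ∧
        ¬Avoids ((R.erase (i1, j1)).erase (i2, j2)) (pin i2 j2 (pin i1 j1 σ))} : Finset _) ⊆
      I.biUnion fun q => {σ : Perm α | σ q.1.1 = q.2.2 ∧ σ q.2.1 = q.1.2} := by
    intro σ hσ
    simp only [Avoids, mem_filter, mem_univ, true_and, not_forall, not_not, mem_erase, ne_eq,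
      Prod.mk.injEq] at hσ
    obtain ⟨havoid, k, hk2, hk1, hkR⟩ := hσ
    have hki1 : k ≠ i1 := by rintro rfl; exact hk1 ⟨rfl, pin_pin_apply_left hi hj σ⟩
    have hki2 : k ≠ i2 := by rintro rfl; exact hk2 ⟨rfl, pin_apply_self _ _ _⟩
    have hmoved : pin i2 j2 (pin i1 j1 σ) k ≠ σ k := fun h => havoid k (h ▸ hkR)
    obtain ⟨hw, hy⟩ := pin_pin_apply_of_ne hi hki1 hki2 hmoved
    simp only [I, mem_biUnion, mem_product, mem_filter, mem_insert, mem_singleton, mem_univ,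
      true_and, Prod.exists]
    rcases hy with hy | hy
    · exact ⟨k, _, i1, σ k, ⟨⟨hkR, hki1, hki2⟩, Or.inl rfl, hw⟩, rfl, hy.symm⟩
    · exact ⟨k, _, i2, σ k, ⟨⟨hkR, hki1, hki2⟩, Or.inr rfl, hw⟩, rfl, hy.symm⟩
  have hI : #I ≤ #R * 4 :=
    (card_product _ _).trans_le <| Nat.mul_le_mul (card_filter_le _ _)
      ((card_product _ _).trans_le (Nat.mul_le_mul card_le_two card_le_two))
  refine (card_le_card hsub).trans <|
    (card_biUnion_le_card_mul _ _ (Fintype.card α - 2)! fun q hq => ?_).trans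
      (Nat.mul_le_mul_right _ hI)
  simp only [I, mem_product, mem_filter, mem_insert, mem_singleton] at hq
  obtain ⟨⟨-, hq1, hq2⟩, hy, -⟩ := hq
  exact card_filter_apply_eq_apply_eq_le (by rcases hy with hy | hy <;> rw [hy] <;> assumption) _ _

theorem card_filter_avoids_le (hi : i1 ≠ i2) (hj : j1 ≠ j2) (R : Finset (α × α)) :
    #{σ | Avoids R σ} ≤
      #{π | π i1 = j1 ∧ π i2 = j2 ∧ Avoids ((R.erase (i1, j1)).erase (i2, j2)) π} *
        (Fintype.card α * Fintype.card α) + #R * 4 * (Fintype.card α - 2)! := by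
  set R' := (R.erase (i1, j1)).erase (i2, j2)
  calc #{σ | Avoids R σ}
      ≤ #(({σ | Avoids R' (pin i2 j2 (pin i1 j1 σ))} : Finset _) ∪
          ({σ | Avoids R σ ∧ ¬Avoids R' (pin i2 j2 (pin i1 j1 σ))} : Finset _)) := by
        refine card_le_card fun σ hσ => ?_
        simp only [mem_filter, mem_univ, true_and, mem_union] at hσ ⊢
        tauto
    _ ≤ _ := (card_union_le _ _).trans <| add_le_add (card_filter_avoids_pin_pin_le hi hj R')
        (card_filter_avoids_and_not_avoids_pin_pin_le hi hj R)

end Equiv.Perm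

lemma le_div_factorial_of_card_bounds {n a t r : ℕ} {C γ : ℝ} (hγ : 0 < γ) (hC : 0 < C)
    (hn : 32 * C / γ + 3 ≤ n) (ha : γ ≤ a / n !) (hat : a ≤ t * (n * n) + r * 4 * (n - 2)!)
    (hr : r ≤ C * n) :
    γ / 4 ≤ t / (n - 2)! := by
  have hγn : 32 * C + 3 * γ ≤ γ * n := by
    have := mul_le_mul_of_nonneg_left hn hγ.le
    rw [mul_add, mul_div_cancel₀ _ hγ.ne'] at this
    linarith
  obtain ⟨m, rfl⟩ : ∃ m, n = m + 2 := ⟨n - 2, by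
    have : (3 : ℝ) < n := by nlinarith
    have : 3 < n := by exact_mod_cast this
    omega⟩
  have hfac : ((m + 2)! : ℝ) = (m + 2) * (m + 1) * m ! := by
    push_cast [Nat.factorial_succ]; ring
  have hat' : (a : ℝ) ≤ t * ((m + 2) * (m + 2)) + r * 4 * m ! := by exact_mod_cast hat
  rw [Nat.add_sub_cancel]
  rw [hfac, le_div_iff₀ (by positivity)] at ha
  push_cast at hγn hr
  rw [le_div_iff₀ (by positivity)]
  -- `γ (m + 1) - 4 C ≥ γ (m + 2) / 4` is where `n ≥ 32 C / γ + 3` enters.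
  have hT : γ / 4 * m ! * ((m + 2) * (m + 2)) ≤ t * ((m + 2) * (m + 2)) := by
    nlinarith [mul_le_mul_of_nonneg_right hr (by positivity : (0 : ℝ) ≤ 4 * m !), hat',
      mul_nonneg (by positivity : (0 : ℝ) ≤ (m + 2) * m !)
        (by linarith : (0 : ℝ) ≤ γ * (m + 1) - 4 * C - γ * (m + 2) / 4)]
  exact le_of_mul_le_mul_right hT (by positivity)

theorem stmt7 (n : ℕ) (C γ : ℝ) (hC : 0 < C) (hγ : 0 < γ)
    (R : Finset (Fin n × Fin n)) (hR : (R.card : ℝ) ≤ C * n)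
    (havoid : γ ≤
      ((Finset.univ.filter fun π : Equiv.Perm (Fin n) => ∀ k, (k, π k) ∉ R).card : ℝ)
        / (n.factorial : ℝ))
    (hn : 32 * C / γ + 3 ≤ (n : ℝ))
    (i1 j1 i2 j2 : Fin n) (hi : i1 ≠ i2) (hj : j1 ≠ j2) :
    γ / 4 ≤
      ((Finset.univ.filter fun π : Equiv.Perm (Fin n) =>
          π i1 = j1 ∧ π i2 = j2 ∧ ∀ k, (k, π k) ∉ (R.erase (i1, j1)).erase (i2, j2)).card : ℝ)
        / ((n - 2).factorial : ℝ) := by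
  refine le_div_factorial_of_card_bounds hγ hC hn havoid ?_ hR
  convert Perm.card_filter_avoids_le hi hj R using 3 <;> simp [Perm.Avoids]
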